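/- Fix positive integers m > 2, λ, and coprime a < b. Then for all sufficiently large k, there does not exist a nontrivial (v,m,k,λ)-SEDF (in any abelian group) having the simple character value property with respect to (a,b). Specifically, such an SEDF must satisfy v/k ≤ m + 4a²(m−1)/(m(b²−a²)), while v−1 = k²(m−1)/λ grows quadratically in k. -/

import Mathlib

open Finset

/-- `{D j}` is a `(v, m, k, lam)`-strong external difference family in the
abelian group `G`: mutually disjoint `k`-subsets whose defining group-ring
identity `D_j · (∑_{i≠j} D_i^{(-1)}) = lam (G - 1)` holds in `ℤ[G]`. -/
def IsSEDF {G : Type} [CommGroup G] [Fintype G] [DecidableEq G]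
    (v m k lam : ℕ) (D : Fin m → Finset G) : Prop :=
  Fintype.card G = v ∧ 2 ≤ m ∧ (∀ i, (D i).card = k) ∧
  (∀ i j, i ≠ j → Disjoint (D i) (D j)) ∧
  ∀ j, (∑ d ∈ D j, MonoidAlgebra.of ℤ G d) *
      (∑ i ∈ Finset.univ.erase j, ∑ d ∈ D i, MonoidAlgebra.of ℤ G d⁻¹)
    = (lam : ℤ) • ((∑ g : G, MonoidAlgebra.of ℤ G g) - 1)

/-- The simple character value property with respect to `(a, b)`. -/
def SCVP {G : Type} [CommGroup G] [Fintype G] [DecidableEq G]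
    (lam : ℕ) (DU : Finset G) (a b : ℕ) : Prop :=
  ∀ χ : G →* ℂ, χ ≠ 1 → (∑ d ∈ DU, χ d) ≠ 0 →
    Real.sqrt (1 + 4 * lam / ‖∑ d ∈ DU, χ d‖ ^ 2) = (b : ℝ) / a

/-! Parseval's identity for `DU = ⋃ᵢ Dᵢ`, a set of size `mk`, reads
`v·mk = (mk)² + ∑_{χ ≠ 1} |χ(DU)|²`. By the simple character value property each nontrivial
term is `0` or `4λa²/(b² − a²)`, and the augmentation of the defining identity gives
`λ(v − 1) = k²(m − 1)`; hence `m(v − mk)(b² − a²) ≤ 4a²k(m − 1)`, which is the bound on `v/k`.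
As the correction term is at most `4a²`, `v ≤ (m + 4a²)k`, while `k² ≤ λ(v − 1)`; so
`k ≤ λ(m + 4a²)`. -/

namespace MonoidHom

def toAddChar {G M : Type*} [Monoid G] [Monoid M] : (G →* M) ≃ AddChar (Additive G) M where
  toFun χ := ⟨fun a => χ a.toMul, map_one χ, fun x y => map_mul χ x.toMul y.toMul⟩
  invFun ψ := ⟨⟨fun g => ψ (Additive.ofMul g), ψ.map_zero_eq_one⟩, ψ.map_add_eq_mul⟩
  left_inv _ := rfl
  right_inv _ := rfl

variable {G : Type*} [CommGroup G] [Fintype G]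

noncomputable instance : Fintype (G →* ℂ) := Fintype.ofEquiv _ toAddChar.symm

lemma card_complex : Fintype.card (G →* ℂ) = Fintype.card G := by
  rw [Fintype.card_congr toAddChar, AddChar.card_eq, Fintype.card_additive]

lemma conj_apply (χ : G →* ℂ) (g : G) : starRingEnd ℂ (χ g) = χ g⁻¹ :=
  (AddChar.map_neg_eq_conj (toAddChar χ) (Additive.ofMul g)).symm

lemma sum_apply_eq_ite [DecidableEq G] (g : G) :
    ∑ χ : G →* ℂ, χ g = if g = 1 then (Fintype.card G : ℂ) else 0 := by
  rw [← Equiv.sum_comp toAddChar.symm, ← Fintype.card_additive]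
  exact AddChar.sum_apply_eq_ite (Additive.ofMul g)

lemma sum_norm_sq_sum_apply (s : Finset G) :
    ∑ χ : G →* ℂ, ‖∑ g ∈ s, χ g‖ ^ 2 = Fintype.card G * #s := by
  classical
  have norm_sq (χ : G →* ℂ) :
      ((‖∑ g ∈ s, χ g‖ ^ 2 : ℝ) : ℂ) = ∑ g ∈ s, ∑ h ∈ s, χ (g * h⁻¹) := by
    rw [Complex.ofReal_pow, ← Complex.mul_conj', map_sum, sum_mul_sum]
    simp only [conj_apply, map_mul]
  apply Complex.ofReal_injective
  calc ((∑ χ : G →* ℂ, ‖∑ g ∈ s, χ g‖ ^ 2 : ℝ) : ℂ)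
      = ∑ g ∈ s, ∑ h ∈ s, ∑ χ : G →* ℂ, χ (g * h⁻¹) := by
        push_cast [norm_sq]
        rw [sum_comm]
        exact sum_congr rfl fun _ _ => sum_comm
    _ = ∑ g ∈ s, (Fintype.card G : ℂ) := by
        refine sum_congr rfl fun g hg => ?_
        simp only [sum_apply_eq_ite, mul_inv_eq_one, sum_ite_eq, if_pos hg]
    _ = _ := by simp [mul_comm]

end MonoidHom

lemma SCVP.norm_sq_mul_le {G : Type} [CommGroup G] [Fintype G] [DecidableEq G] {lam a b : ℕ}
    {DU : Finset G} (hs : SCVP lam DU a b) (ha : 0 < a) {χ : G →* ℂ} (hχ : χ ≠ 1) :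
    ‖∑ d ∈ DU, χ d‖ ^ 2 * ((b : ℝ) ^ 2 - a ^ 2) ≤ 4 * lam * a ^ 2 := by
  by_cases hz : ∑ d ∈ DU, χ d = 0
  · rw [hz, norm_zero, sq, zero_mul, zero_mul]
    positivity
  have hpos : 0 < ‖∑ d ∈ DU, χ d‖ ^ 2 := by positivity
  have hsq := congrArg (· ^ 2) (hs χ hχ hz)
  simp only [Real.sq_sqrt (by positivity : (0 : ℝ) ≤ 1 + 4 * lam / ‖∑ d ∈ DU, χ d‖ ^ 2)] at hsq
  field_simp at hsq
  nlinarith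

namespace IsSEDF
variable {G : Type} [CommGroup G] [Fintype G] [DecidableEq G] {v m k lam : ℕ}
  {D : Fin m → Finset G}

lemma card_biUnion (h : IsSEDF v m k lam D) : #(univ.biUnion D) = m * k := by
  rw [Finset.card_biUnion fun i _ j _ hij => h.2.2.2.1 i j hij]
  simp [h.2.2.1]

lemma lam_mul_card_sub_one (h : IsSEDF v m k lam D) :
    (lam : ℤ) * (v - 1) = k ^ 2 * (m - 1) := by
  obtain ⟨rfl, hm, hk, -, hid⟩ := h
  have augmented : (k : ℤ) * (m * k - k) = lam * (Fintype.card G - 1) := by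
    simpa [hk] using congrArg (MonoidAlgebra.lift ℤ ℤ G 1) (hid ⟨0, by omega⟩)
  linear_combination -augmented

lemma mul_sub_mul_le_of_SCVP {a b : ℕ} (h : IsSEDF v m k lam D)
    (hs : SCVP lam (univ.biUnion D) a b) (ha : 0 < a) (hk : 0 < k) :
    (m : ℝ) * (v - m * k) * (b ^ 2 - a ^ 2) ≤ 4 * a ^ 2 * k * (m - 1) := by
  set DU := univ.biUnion D
  have hv : Fintype.card G = v := h.1
  have hcard : #DU = m * k := h.card_biUnion
  have parseval := MonoidHom.sum_norm_sq_sum_apply DU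
  rw [← add_sum_erase _ _ (mem_univ 1)] at parseval
  simp only [MonoidHom.one_apply, sum_const, nsmul_eq_mul, mul_one, Complex.norm_natCast,
    hcard, hv] at parseval
  have nontrivial : (∑ χ ∈ univ.erase (1 : G →* ℂ), ‖∑ g ∈ DU, χ g‖ ^ 2) * (b ^ 2 - a ^ 2)
      ≤ (v - 1) * (4 * lam * a ^ 2) := by
    rw [sum_mul]
    refine (sum_le_card_nsmul _ _ _ fun χ hχ => hs.norm_sq_mul_le ha (ne_of_mem_erase hχ)).trans ?_
    rw [card_erase_of_mem (mem_univ _), card_univ, MonoidHom.card_complex, hv, nsmul_eq_mul,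
      Nat.cast_pred (hv ▸ Fintype.card_pos)]
  rw [eq_sub_of_add_eq' parseval] at nontrivial
  have count : (lam : ℝ) * (v - 1) = k ^ 2 * (m - 1) := by exact_mod_cast h.lam_mul_card_sub_one
  refine le_of_mul_le_mul_left ?_ (Nat.cast_pos.mpr hk : (0 : ℝ) < k)
  push_cast at nontrivial
  linear_combination nontrivial + 4 * a ^ 2 * count

lemma div_le_of_SCVP {a b : ℕ} (h : IsSEDF v m k lam D) (hs : SCVP lam (univ.biUnion D) a b)
    (ha : 0 < a) (hab : a < b) (hk : 0 < k) :
    (v : ℚ) / k ≤ m + 4 * a ^ 2 * ((m : ℚ) - 1) / (m * ((b : ℚ) ^ 2 - a ^ 2)) := by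
  have key : (m : ℚ) * (v - m * k) * (b ^ 2 - a ^ 2) ≤ 4 * a ^ 2 * k * (m - 1) := by
    exact_mod_cast h.mul_sub_mul_le_of_SCVP hs ha hk
  have hkQ : (0 : ℚ) < k := by exact_mod_cast hk
  have hmB : (0 : ℚ) < m * ((b : ℚ) ^ 2 - a ^ 2) := by
    have hab2 : (a : ℚ) ^ 2 < b ^ 2 := by exact_mod_cast Nat.pow_lt_pow_left hab two_ne_zero
    exact mul_pos (Nat.cast_pos.mpr (by have := h.2.1; omega)) (sub_pos.mpr hab2)
  rw [← sub_le_iff_le_add', le_div_iff₀ hmB,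
    show ((v : ℚ) / k - m) * (m * (b ^ 2 - a ^ 2)) = m * (v - m * k) * (b ^ 2 - a ^ 2) / k by
      field_simp, div_le_iff₀ hkQ]
  linarith

lemma le_mul_of_card_le (h : IsSEDF v m k lam D) (hk : 0 < k) {c : ℚ}
    (hv : (v : ℚ) ≤ c * k) : (k : ℚ) ≤ lam * c := by
  have count : (lam : ℚ) * (v - 1) = k ^ 2 * (m - 1) := by exact_mod_cast h.lam_mul_card_sub_one
  have hm : (2 : ℚ) ≤ m := by exact_mod_cast h.2.1
  have hkQ : (0 : ℚ) < k := by exact_mod_cast hk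
  refine le_of_mul_le_mul_right ?_ hkQ
  nlinarith

end IsSEDF

lemma four_mul_sq_mul_sub_one_div_le {m a b : ℕ} (hm : 0 < m) (hab : a < b) :
    4 * a ^ 2 * ((m : ℚ) - 1) / (m * ((b : ℚ) ^ 2 - a ^ 2)) ≤ 4 * a ^ 2 := by
  have hB : (a : ℚ) ^ 2 + 1 ≤ b ^ 2 := by exact_mod_cast Nat.pow_lt_pow_left hab two_ne_zero
  have hmQ : (1 : ℚ) ≤ m := by exact_mod_cast hm
  have hsub : (m : ℚ) - 1 ≤ m * ((b : ℚ) ^ 2 - a ^ 2) := by nlinarith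
  rw [div_le_iff₀ (by nlinarith)]
  exact mul_le_mul_of_nonneg_left hsub (by positivity)

theorem sedf_scvp_asymptotic_nonexistence_general (m lam a b : ℕ)
    (ha : 0 < a) (hab : a < b) :
    (∀ (G : Type) [CommGroup G] [Fintype G] [DecidableEq G]
        (v k : ℕ) (D : Fin m → Finset G),
        IsSEDF v m k lam D → 1 < k → SCVP lam (Finset.univ.biUnion D) a b →
          (v : ℚ) / k ≤ m + 4 * a ^ 2 * ((m : ℚ) - 1) / (m * ((b : ℚ) ^ 2 - a ^ 2))) ∧
    ∃ K : ℕ, ∀ k, K ≤ k →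
      ∀ (G : Type) [CommGroup G] [Fintype G] [DecidableEq G]
        (v : ℕ) (D : Fin m → Finset G),
        ¬ (IsSEDF v m k lam D ∧ 1 < k ∧ SCVP lam (Finset.univ.biUnion D) a b) := by
  refine ⟨fun G _ _ _ v k D h hk hs => h.div_le_of_SCVP hs ha hab (by omega),
    lam * (m + 4 * a ^ 2) + 1, fun k hK G _ _ _ v D ⟨h, hk, hs⟩ => ?_⟩
  have hm2 : 2 ≤ m := h.2.1
  have hv : (v : ℚ) ≤ (m + 4 * a ^ 2) * k := by
    have := (h.div_le_of_SCVP hs ha hab (by omega)).trans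
      (add_le_add_right (four_mul_sq_mul_sub_one_div_le (by omega) hab) _)
    rwa [div_le_iff₀ (by exact_mod_cast (show 0 < k by omega))] at this
  have hkK : ((lam * (m + 4 * a ^ 2) + 1 : ℕ) : ℚ) ≤ k := by exact_mod_cast hK
  push_cast at hkK
  linarith [h.le_mul_of_card_le (by omega) hv]

theorem sedf_scvp_asymptotic_nonexistence (m lam a b : ℕ) (hm : 2 < m)
    (hlam : 0 < lam) (ha : 0 < a) (hab : a < b) (hco : Nat.Coprime a b) :
    (∀ (G : Type) [CommGroup G] [Fintype G] [DecidableEq G]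
        (v k : ℕ) (D : Fin m → Finset G),
        IsSEDF v m k lam D → 1 < k → SCVP lam (Finset.univ.biUnion D) a b →
          (v : ℚ) / k ≤ m + 4 * a ^ 2 * ((m : ℚ) - 1) / (m * ((b : ℚ) ^ 2 - a ^ 2))) ∧
    ∃ K : ℕ, ∀ k, K ≤ k →
      ∀ (G : Type) [CommGroup G] [Fintype G] [DecidableEq G]
        (v : ℕ) (D : Fin m → Finset G),
        ¬ (IsSEDF v m k lam D ∧ 1 < k ∧ SCVP lam (Finset.univ.biUnion D) a b) :=
  sedf_scvp_asymptotic_nonexistence_general m lam a b ha hab
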